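/- Let b > 0 and let 0 < T₀ < T₁ < b. Let x₁ be the unique solution in (0,1) of b·x = T₁·artanh(x). Then there exists a₀ > 0 such that for every a > a₀ the number p := tanh( a/(T₁ − T₀) ) satisfies x₁ < p < 1, and there exists a unique q* ∈ ℝ such that q* + b·p = T₀·artanh(p) and a + q* + b·p = T₁·artanh(p). (Thus for a sufficiently large jump a of the magnetic field, the mean-field equilibrium equations at temperatures T₀ and T₁ share a common stable solution p at the field value q*, corresponding to a Reeb chord joining the initial and terminal equilibrium Legendrians.) -/

import Mathlib

/-!
Subtracting the two equilibrium equations eliminates `q` and `b·p`, leaving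
`a = (T₁ - T₀)·artanh p`; the choice `p = tanh (a / (T₁ - T₀))` makes this hold identically,
and `q*` is then read off from the first equation. Stability `x₁ < p` is monotonicity of
`artanh`, which is why `a₀ = (T₁ - T₀)·artanh x₁` works.
-/

/-- The inverse hyperbolic tangent on `(−1,1)`:
`artanh x = (1/2)·log((1+x)/(1−x))`. -/
noncomputable def artanh (x : ℝ) : ℝ := (1 / 2) * Real.log ((1 + x) / (1 - x))

theorem artanh_eq_real_artanh {x : ℝ} (hx : x ∈ Set.Icc (-1) 1) : artanh x = Real.artanh x :=
  (Real.artanh_eq_half_log hx).symm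

theorem artanh_tanh (t : ℝ) : artanh (Real.tanh t) = t := by
  rw [artanh_eq_real_artanh ⟨(Real.neg_one_lt_tanh t).le, (Real.tanh_lt_one t).le⟩,
    Real.artanh_tanh]

theorem artanh_pos {x : ℝ} (hx : x ∈ Set.Ioo 0 1) : 0 < artanh x := by
  rw [artanh_eq_real_artanh ⟨by linarith [hx.1], hx.2.le⟩]
  exact Real.artanh_pos hx

theorem lt_tanh_iff_artanh_lt {x t : ℝ} (hx : x ∈ Set.Ioo (-1) 1) :
    x < Real.tanh t ↔ artanh x < t := by
  rw [← Real.artanh_lt_artanh_iff hx ⟨Real.neg_one_lt_tanh t, Real.tanh_lt_one t⟩,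
    Real.artanh_tanh, artanh_eq_real_artanh (Set.Ioo_subset_Icc_self hx)]

theorem existsUnique_field_of_jump_eq {a b T₀ T₁ p : ℝ} (h : a = (T₁ - T₀) * artanh p) :
    ∃! q : ℝ, q + b * p = T₀ * artanh p ∧ a + q + b * p = T₁ * artanh p :=
  ⟨T₀ * artanh p - b * p, ⟨by ring, by rw [h]; ring⟩, fun _ hq => by linarith [hq.1]⟩

theorem reeb_chord_existence_general
    (b T₀ T₁ : ℝ) (hT : T₀ < T₁)
    (x₁ : ℝ) (hx₁ : x₁ ∈ Set.Ioo (0 : ℝ) 1) :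
    ∃ a₀ > 0, ∀ a > a₀,
      (x₁ < Real.tanh (a / (T₁ - T₀)) ∧ Real.tanh (a / (T₁ - T₀)) < 1) ∧
      ∃! qstar : ℝ,
        qstar + b * Real.tanh (a / (T₁ - T₀))
            = T₀ * artanh (Real.tanh (a / (T₁ - T₀))) ∧
        a + qstar + b * Real.tanh (a / (T₁ - T₀))
            = T₁ * artanh (Real.tanh (a / (T₁ - T₀))) := by
  have hgap : 0 < T₁ - T₀ := sub_pos.2 hT
  refine ⟨(T₁ - T₀) * artanh x₁, mul_pos hgap (artanh_pos hx₁), fun a ha => ⟨⟨?_, ?_⟩, ?_⟩⟩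
  · rw [lt_tanh_iff_artanh_lt ⟨by linarith [hx₁.1], hx₁.2⟩, lt_div_iff₀ hgap]
    linarith
  · exact Real.tanh_lt_one _
  · apply existsUnique_field_of_jump_eq
    rw [artanh_tanh]
    field_simp

/-- For `0 < T₀ < T₁ < b` and a sufficiently large jump `a` of
the magnetic field, the magnetization `p = tanh(a/(T₁−T₀))` is stable for
temperature `T₁` (i.e. `x₁ < p < 1`, where `x₁` is the unique solution in
`(0,1)` of `b·x = T₁·artanh x`), and there is a unique field value `q*` at
which the mean-field equilibrium equations at temperatures `T₀` (field `q*`)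
and `T₁` (field `q* + a`) are simultaneously satisfied by `p` — a Reeb chord
joining the initial and terminal equilibrium Legendrians. -/
theorem reeb_chord_existence
    (b T₀ T₁ : ℝ) (hb : 0 < b) (hT₀ : 0 < T₀) (hT : T₀ < T₁) (hT₁ : T₁ < b)
    (x₁ : ℝ) (hx₁ : x₁ ∈ Set.Ioo (0 : ℝ) 1) (hx₁eq : b * x₁ = T₁ * artanh x₁)
    (hx₁uniq : ∀ x ∈ Set.Ioo (0 : ℝ) 1, b * x = T₁ * artanh x → x = x₁) :
    ∃ a₀ > 0, ∀ a > a₀,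
      (x₁ < Real.tanh (a / (T₁ - T₀)) ∧ Real.tanh (a / (T₁ - T₀)) < 1) ∧
      ∃! qstar : ℝ,
        qstar + b * Real.tanh (a / (T₁ - T₀))
            = T₀ * artanh (Real.tanh (a / (T₁ - T₀))) ∧
        a + qstar + b * Real.tanh (a / (T₁ - T₀))
            = T₁ * artanh (Real.tanh (a / (T₁ - T₀))) :=
  reeb_chord_existence_general b T₀ T₁ hT x₁ hx₁
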